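/- Lyapunov exponent of the viscous energy shell system (Lemma 3.5): let ν > 0 and let R be the continuous linear operator on ℓ² with (Rx)_1 = −x_2 and (Rx)_n = x_{n−1} − x_{n+1} for n ≥ 2. Then the solution d(t;x) = exp(t(R − νI)) x of the homogeneous system d/dt d(t;x) = (R − νI) d(t;x), d(0;x) = x, satisfies ‖d(t;x)‖ = e^{−νt} ‖x‖ for every x ∈ ℓ² and every t ≥ 0. -/

import Mathlib

/-!
The shell operator `R` is skew-adjoint: `⟪R x, y⟫ + ⟪x, R y⟫` telescopes to `0` because the
coordinates of `ℓ²` sequences tend to zero. Hence `exp (t R)` is unitary, and since `ν I` is central,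
`exp (t (R - ν I)) = e^{-ν t} exp (t R)`.
-/

noncomputable section

abbrev ell2 : Type := lp (fun _ : ℕ => ℝ) 2

open Filter Topology NormedSpace

theorem Memℓp.tendsto_norm_cofinite_zero {α : Type*} {E : α → Type*}
    [∀ i, NormedAddCommGroup (E i)] {p : ENNReal} (hp : 0 < p.toReal) {f : ∀ i, E i}
    (hf : Memℓp f p) : Tendsto (fun i => ‖f i‖) cofinite (𝓝 0) := by
  have hpow := ((hf.summable hp).tendsto_cofinite_zero).rpow_const
    (Or.inr (inv_nonneg.2 hp.le) : (0 : ℝ) ≠ 0 ∨ 0 ≤ p.toReal⁻¹)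
  simpa [Real.rpow_rpow_inv (norm_nonneg _) hp.ne', Real.zero_rpow (inv_ne_zero hp.ne')] using hpow

theorem tsum_eq_zero_of_telescoping {E : Type*} [AddCommGroup E] [TopologicalSpace E]
    [IsTopologicalAddGroup E] [T2Space E] {f c : ℕ → E} (hf : Summable f)
    (h0 : f 0 = -c 0) (hsucc : ∀ n, f (n + 1) = c n - c (n + 1))
    (hc : Tendsto c atTop (𝓝 0)) : ∑' n, f n = 0 := by
  have hpartial : ∀ N, ∑ n ∈ Finset.range (N + 1), f n = -c N := by
    intro N
    induction N with
    | zero => simp [h0]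
    | succ N ih => rw [Finset.sum_range_succ, ih, hsucc]; abel
  have hlim := hf.hasSum.tendsto_sum_nat.comp (tendsto_add_atTop_nat 1)
  refine tendsto_nhds_unique hlim ?_
  simpa [Function.comp_def, hpartial] using hc.neg

theorem NormedSpace.exp_add_smul_one {𝔸 : Type*} [NormedRing 𝔸] [NormedAlgebra ℝ 𝔸]
    [CompleteSpace 𝔸] (a : 𝔸) (c : ℝ) : exp (a + c • (1 : 𝔸)) = Real.exp c • exp a := by
  let +nondep : NormedAlgebra ℚ 𝔸 := .restrictScalars ℚ ℝ 𝔸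
  rw [← Algebra.algebraMap_eq_smul_one, exp_add_of_commute (Algebra.commutes c a).symm,
    ← algebraMap_exp_comm, ← Real.exp_eq_exp_ℝ, ← Algebra.commutes, ← Algebra.smul_def]

theorem ell2.tendsto_apply_atTop_zero (x : ell2) :
    Tendsto (fun n => (x : ∀ _ : ℕ, ℝ) n) atTop (𝓝 0) := by
  rw [tendsto_zero_iff_norm_tendsto_zero, ← Nat.cofinite_eq_atTop]
  exact (lp.memℓp x).tendsto_norm_cofinite_zero (by norm_num)

theorem ContinuousLinearMap.norm_exp_apply_of_mem_skewAdjoint {𝕜 H : Type*} [RCLike 𝕜]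
    [NormedAddCommGroup H] [InnerProductSpace 𝕜 H] [CompleteSpace H] {A : H →L[𝕜] H}
    (hA : A ∈ skewAdjoint (H →L[𝕜] H)) (x : H) : ‖exp A x‖ = ‖x‖ := by
  have hunitary : exp A ∈ unitary (H →L[𝕜] H) := by
    let +nondep : NormedAlgebra ℚ (H →L[𝕜] H) := .restrictScalars ℚ 𝕜 (H →L[𝕜] H)
    exact exp_mem_unitary_of_mem_skewAdjoint hA
  exact norm_map_of_mem_unitary hunitary x

section ShellOperator

variable (R : ell2 →L[ℝ] ell2)
  (hR0 : ∀ x : ell2, (R x : ∀ _ : ℕ, ℝ) 0 = -((x : ∀ _ : ℕ, ℝ) 1))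
  (hR : ∀ x : ell2, ∀ n : ℕ,
    (R x : ∀ _ : ℕ, ℝ) (n + 1) = (x : ∀ _ : ℕ, ℝ) n - (x : ∀ _ : ℕ, ℝ) (n + 2))

include hR0 hR in
theorem inner_shell_add_inner_shell_eq_zero (x y : ell2) :
    inner ℝ (R x) y + inner ℝ x (R y) = 0 := by
  rw [lp.inner_eq_tsum, lp.inner_eq_tsum,
    ← (lp.summable_inner _ _).tsum_add (lp.summable_inner _ _)]
  have hx := ell2.tendsto_apply_atTop_zero x
  have hy := ell2.tendsto_apply_atTop_zero y
  refine tsum_eq_zero_of_telescoping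
    (c := fun n => (x : ∀ _ : ℕ, ℝ) n * (y : ∀ _ : ℕ, ℝ) (n + 1)
      + (x : ∀ _ : ℕ, ℝ) (n + 1) * (y : ∀ _ : ℕ, ℝ) n)
    ((lp.summable_inner _ _).add (lp.summable_inner _ _)) ?_ (fun n => ?_) ?_
  · simp only [hR0, RCLike.inner_apply, Real.ringHom_apply]
    ring
  · simp only [hR, RCLike.inner_apply, Real.ringHom_apply]
    ring
  · simpa using (hx.mul (hy.comp (tendsto_add_atTop_nat 1))).add
      ((hx.comp (tendsto_add_atTop_nat 1)).mul hy)

include hR0 hR in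
theorem shell_mem_skewAdjoint : R ∈ skewAdjoint (ell2 →L[ℝ] ell2) := by
  rw [skewAdjoint.mem_iff, ContinuousLinearMap.star_eq_adjoint, eq_comm,
    ContinuousLinearMap.eq_adjoint_iff]
  intro x y
  rw [neg_apply, inner_neg_left, neg_eq_iff_add_eq_zero,
    inner_shell_add_inner_shell_eq_zero R hR0 hR]

end ShellOperator

theorem lyapunov_exponent_shell_system_general
    (ν : ℝ)
    (R : ell2 →L[ℝ] ell2)
    (hR0 : ∀ x : ell2, (R x : ∀ _ : ℕ, ℝ) 0 = -((x : ∀ _ : ℕ, ℝ) 1))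
    (hR : ∀ x : ell2, ∀ n : ℕ,
      (R x : ∀ _ : ℕ, ℝ) (n + 1) = (x : ∀ _ : ℕ, ℝ) n - (x : ∀ _ : ℕ, ℝ) (n + 2)) :
    ∀ (x : ell2) (t : ℝ), 0 ≤ t →
      ‖NormedSpace.exp (t • (R - ν • (1 : ell2 →L[ℝ] ell2))) x‖ = Real.exp (-ν * t) * ‖x‖ := by
  intro x t _
  have hsplit : t • (R - ν • (1 : ell2 →L[ℝ] ell2)) = t • R + (-ν * t) • 1 := by
    rw [smul_sub, smul_smul, sub_eq_add_neg, ← neg_smul, neg_mul, mul_comm]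
  rw [hsplit, exp_add_smul_one, smul_apply, norm_smul,
    ContinuousLinearMap.norm_exp_apply_of_mem_skewAdjoint
      (skewAdjoint.smul_mem t (shell_mem_skewAdjoint R hR0 hR)),
    Real.norm_of_nonneg (Real.exp_pos _).le]

/-- **Lyapunov exponent of the viscous energy shell system** (Lemma 3.5): let `ν > 0` and
let `R` be the continuous linear operator on `ℓ²` with `(Rx)_1 = -x_2` and
`(Rx)_n = x_{n-1} - x_{n+1}` for `n ≥ 2` (sequences are indexed by `ℕ`, so index `k`
corresponds to the paper's index `k + 1`). Then the solution
`d(t;x) = exp(t(R - νI)) x` of the homogeneous system satisfies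
`‖d(t;x)‖ = e^{-νt} ‖x‖` for every `x ∈ ℓ²` and `t ≥ 0`. -/
theorem lyapunov_exponent_shell_system
    (ν : ℝ) (hν : 0 < ν)
    (R : ell2 →L[ℝ] ell2)
    (hR0 : ∀ x : ell2, (R x : ∀ _ : ℕ, ℝ) 0 = -((x : ∀ _ : ℕ, ℝ) 1))
    (hR : ∀ x : ell2, ∀ n : ℕ,
      (R x : ∀ _ : ℕ, ℝ) (n + 1) = (x : ∀ _ : ℕ, ℝ) n - (x : ∀ _ : ℕ, ℝ) (n + 2)) :
    ∀ (x : ell2) (t : ℝ), 0 ≤ t →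
      ‖NormedSpace.exp (t • (R - ν • (1 : ell2 →L[ℝ] ell2))) x‖ = Real.exp (-ν * t) * ‖x‖ :=
  lyapunov_exponent_shell_system_general ν R hR0 hR

end
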